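/- arXiv:2110.02876 — 3 statements merged into one kernel-verified Lean document; each statement's English description precedes it below -/
import Mathlib

section
/- Let f₁, f₂ : T → ℝ be measurable, exponentially integrable functions on a compact set T with λ(T) > 0, and suppose ‖f₁ - f₂‖_∞ ≤ ε. Then the logarithm of the ratio of their logistic density transforms satisfies |log(Φ[f₁](t) / Φ[f₂](t))| ≤ 2ε for all t ∈ T, where Φ[f](t) = e^{f(t)} / ∫_T e^{f(u)} dλ(u). -/
open MeasureTheory

theorem log_ratio_logistic_transform_bound {d : ℕ} (T : Set (Fin d → ℝ))
    (hT : IsCompact T) (hTpos : 0 < volume T)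
    (f₁ f₂ : (Fin d → ℝ) → ℝ) (hf₁ : Measurable f₁) (hf₂ : Measurable f₂)
    (hint₁ : IntegrableOn (fun u => Real.exp (f₁ u)) T)
    (hint₂ : IntegrableOn (fun u => Real.exp (f₂ u)) T)
    (ε : ℝ) (hclose : ∀ t ∈ T, |f₁ t - f₂ t| ≤ ε) :
    ∀ t ∈ T,
      |Real.log ((Real.exp (f₁ t) / ∫ u in T, Real.exp (f₁ u)) /
        (Real.exp (f₂ t) / ∫ u in T, Real.exp (f₂ u)))| ≤ 2 * ε := by
  intro t ht
  set I₁ := ∫ u in T, Real.exp (f₁ u) with hI₁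
  set I₂ := ∫ u in T, Real.exp (f₂ u) with hI₂
  have hpos : ∀ (g : (Fin d → ℝ) → ℝ), IntegrableOn (fun u => Real.exp (g u)) T →
      0 < ∫ u in T, Real.exp (g u) := by
    intro g hg
    rw [setIntegral_pos_iff_support_of_nonneg_ae
      (Filter.Eventually.of_forall fun x => (Real.exp_pos _).le) hg]
    have : (Function.support fun u => Real.exp (g u)) = Set.univ := by
      ext x; simp [Function.support, Real.exp_ne_zero]
    rw [this, Set.univ_inter]; exact hTpos
  have hI₁pos : 0 < I₁ := hpos f₁ hint₁
  have hI₂pos : 0 < I₂ := hpos f₂ hint₂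
  -- comparison of integrals
  have hcmp : ∀ (g h : (Fin d → ℝ) → ℝ), IntegrableOn (fun u => Real.exp (g u)) T →
      IntegrableOn (fun u => Real.exp (h u)) T → (∀ u ∈ T, g u - h u ≤ ε) →
      (∫ u in T, Real.exp (g u)) ≤ Real.exp ε * ∫ u in T, Real.exp (h u) := by
    intro g h hg hh hle
    rw [← integral_const_mul]
    apply setIntegral_mono_on hg (hh.const_mul _)
      hT.measurableSet
    intro u hu
    rw [← Real.exp_add]
    exact Real.exp_le_exp.2 (by linarith [hle u hu])
  have h12 : I₁ ≤ Real.exp ε * I₂ :=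
    hcmp f₁ f₂ hint₁ hint₂ fun u hu => (abs_le.1 (hclose u hu)).2
  have h21 : I₂ ≤ Real.exp ε * I₁ := by
    apply hcmp f₂ f₁ hint₂ hint₁
    intro u hu
    have := (abs_le.1 (hclose u hu)).1
    linarith
  have hlog12 : Real.log I₁ - Real.log I₂ ≤ ε := by
    have := Real.log_le_log hI₁pos h12
    rwa [Real.log_mul (Real.exp_ne_zero _) hI₂pos.ne', Real.log_exp, ← sub_le_iff_le_add] at this
  have hlog21 : Real.log I₂ - Real.log I₁ ≤ ε := by
    have := Real.log_le_log hI₂pos h21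
    rwa [Real.log_mul (Real.exp_ne_zero _) hI₁pos.ne', Real.log_exp, ← sub_le_iff_le_add] at this
  have hrw : Real.log ((Real.exp (f₁ t) / I₁) / (Real.exp (f₂ t) / I₂))
      = (f₁ t - f₂ t) + (Real.log I₂ - Real.log I₁) := by
    rw [Real.log_div (by positivity) (by positivity), Real.log_div (Real.exp_ne_zero _) hI₁pos.ne',
      Real.log_div (Real.exp_ne_zero _) hI₂pos.ne', Real.log_exp, Real.log_exp]
    ring
  rw [hrw]
  have habs := abs_le.1 (hclose t ht)
  rw [abs_le]
  constructor <;> [linarith [habs.1]; linarith [habs.2]]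
end

section
/- Let p₁, p₂ be everywhere positive probability density functions on a measure space (T, λ) with h := sup_{t∈T} |log p₁(t) - log p₂(t)| < ∞. Then the squared Hellinger distance satisfies d_H(p₁, p₂)² ≤ h² e^h, i.e., d_H(p₁, p₂) ≤ h e^{h/2}. -/
open MeasureTheory

lemma abs_exp_sub_one_le_aux (x : ℝ) : |Real.exp x - 1| ≤ |x| * Real.exp |x| := by
  rcases le_or_gt 0 x with hx | hx
  · rw [abs_of_nonneg hx,
      abs_of_nonneg (by linarith [Real.one_le_exp hx] : (0:ℝ) ≤ Real.exp x - 1)]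
    have h1 : 1 - x ≤ Real.exp (-x) := by linarith [Real.add_one_le_exp (-x)]
    rw [Real.exp_neg] at h1
    have h2 := Real.exp_pos x
    have h3 : Real.exp x * (Real.exp x)⁻¹ = 1 := mul_inv_cancel₀ (ne_of_gt h2)
    nlinarith
  · rw [abs_of_neg hx,
      abs_of_nonpos (by linarith [Real.exp_lt_one_iff.mpr hx] : Real.exp x - 1 ≤ 0)]
    have h1 : x + 1 ≤ Real.exp x := Real.add_one_le_exp x
    have h2 : 1 ≤ Real.exp (-x) := Real.one_le_exp (by linarith)
    nlinarith

theorem hellinger_bound_of_sup_log_ratio {α : Type*} [MeasurableSpace α]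
    (μ : Measure α) (p₁ p₂ : α → ℝ)
    (hp₁meas : Measurable p₁) (hp₂meas : Measurable p₂)
    (hp₁pos : ∀ t, 0 < p₁ t) (hp₂pos : ∀ t, 0 < p₂ t)
    (hp₁int : Integrable p₁ μ) (hp₂int : Integrable p₂ μ)
    (hp₁dens : ∫ t, p₁ t ∂μ = 1) (hp₂dens : ∫ t, p₂ t ∂μ = 1)
    (h : ℝ) (hbound : ∀ t, |Real.log (p₁ t) - Real.log (p₂ t)| ≤ h) :
    (1 / 2) * ∫ t, (Real.sqrt (p₁ t) - Real.sqrt (p₂ t)) ^ 2 ∂μ ≤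
      h ^ 2 * Real.exp h := by
  cases isEmpty_or_nonempty α with
  | inl hE =>
    rw [Measure.eq_zero_of_isEmpty μ] at hp₁dens
    simp at hp₁dens
  | inr hN =>
    have h0 : 0 ≤ h := (abs_nonneg _).trans (hbound (Classical.arbitrary α))
    -- pointwise bound
    have key : ∀ t, (Real.sqrt (p₁ t) - Real.sqrt (p₂ t)) ^ 2 ≤
        (h ^ 2 / 4) * Real.exp h * p₂ t := by
      intro t
      have ha := hp₁pos t
      have hb := hp₂pos t
      set a := p₁ t
      set b := p₂ t
      set L := Real.log a - Real.log b with hL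
      have sa : Real.sqrt a = Real.exp (Real.log a / 2) := by
        rw [← Real.log_sqrt ha.le, Real.exp_log (Real.sqrt_pos.mpr ha)]
      have sb : Real.sqrt b = Real.exp (Real.log b / 2) := by
        rw [← Real.log_sqrt hb.le, Real.exp_log (Real.sqrt_pos.mpr hb)]
      have e1 : Real.sqrt a - Real.sqrt b =
          Real.exp (Real.log b / 2) * (Real.exp (L / 2) - 1) := by
        rw [sa, sb, mul_sub, ← Real.exp_add, mul_one, hL]
        ring_nf
      have eb : Real.exp (Real.log b / 2) ^ 2 = b := by
        rw [← Real.exp_nat_mul]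
        push_cast
        rw [show (2:ℝ) * (Real.log b / 2) = Real.log b by ring, Real.exp_log hb]
      have e2 : (Real.sqrt a - Real.sqrt b) ^ 2 = b * (Real.exp (L / 2) - 1) ^ 2 := by
        rw [e1, mul_pow, eb]
      rw [e2]
      have hb1 : |L| ≤ h := hbound t
      have h3 : |Real.exp (L / 2) - 1| ≤ (h / 2) * Real.exp (h / 2) := by
        have h5 := abs_exp_sub_one_le_aux (L / 2)
        have hL2 : |L / 2| ≤ h / 2 := by
          rw [abs_div, abs_of_pos (by norm_num : (0:ℝ) < 2)]
          linarith
        calc |Real.exp (L / 2) - 1| ≤ |L / 2| * Real.exp |L / 2| := h5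
          _ ≤ (h / 2) * Real.exp (h / 2) := by
              apply mul_le_mul hL2 (Real.exp_le_exp.mpr hL2) (Real.exp_pos _).le
              linarith
      have h4 : (Real.exp (L / 2) - 1) ^ 2 ≤ (h ^ 2 / 4) * Real.exp h := by
        have h6 : (Real.exp (L / 2) - 1) ^ 2 ≤ ((h / 2) * Real.exp (h / 2)) ^ 2 := by
          rw [← sq_abs]
          exact pow_le_pow_left₀ (abs_nonneg _) h3 2
        have eh : Real.exp (h / 2) ^ 2 = Real.exp h := by
          rw [← Real.exp_nat_mul]
          push_cast
          rw [show (2:ℝ) * (h / 2) = h by ring]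
        calc (Real.exp (L / 2) - 1) ^ 2 ≤ ((h / 2) * Real.exp (h / 2)) ^ 2 := h6
          _ = (h ^ 2 / 4) * Real.exp h := by rw [mul_pow, eh]; ring
      calc b * (Real.exp (L / 2) - 1) ^ 2 ≤ b * ((h ^ 2 / 4) * Real.exp h) :=
            mul_le_mul_of_nonneg_left h4 hb.le
        _ = (h ^ 2 / 4) * Real.exp h * b := by ring
    have gint : Integrable (fun t => (h ^ 2 / 4) * Real.exp h * p₂ t) μ :=
      hp₂int.const_mul _
    have imono : ∫ t, (Real.sqrt (p₁ t) - Real.sqrt (p₂ t)) ^ 2 ∂μ ≤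
        ∫ t, (h ^ 2 / 4) * Real.exp h * p₂ t ∂μ :=
      integral_mono_of_nonneg (ae_of_all _ fun t => sq_nonneg _) gint (ae_of_all _ key)
    have ieq : ∫ t, (h ^ 2 / 4) * Real.exp h * p₂ t ∂μ = (h ^ 2 / 4) * Real.exp h := by
      rw [integral_const_mul, hp₂dens, mul_one]
    rw [ieq] at imono
    nlinarith [Real.exp_pos h, sq_nonneg h,
      mul_nonneg (sq_nonneg h) (Real.exp_pos h).le]
end

section
/- Let T be a compact set with λ(T) > 0 and let z, z' : T → ℝ be bounded measurable functions. Then the sup-distance between their logistic density transforms satisfies ‖Φ[z] − Φ[z']‖_∞ ≤ (e^{2M}/λ(T)) · (e^{2‖z − z'‖_∞} − 1), where M = max(‖z‖_∞, ‖z'‖_∞) and Φ[f](t) = e^{f(t)} / ∫_T e^{f(u)} dλ(u). -/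
open MeasureTheory

lemma abs_exp_sub_exp_le (a b c : ℝ) (h : |a - b| ≤ c) :
    |Real.exp a - Real.exp b| ≤ (Real.exp c - 1) * Real.exp b := by
  obtain ⟨h1, h2⟩ := abs_le.1 h
  have e1 : Real.exp a ≤ Real.exp (b + c) := Real.exp_le_exp.2 (by linarith)
  have e2 : Real.exp (b - c) ≤ Real.exp a := Real.exp_le_exp.2 (by linarith)
  have hbc : Real.exp (b + c) = Real.exp b * Real.exp c := Real.exp_add b c
  have hbc' : Real.exp (b - c) * Real.exp c = Real.exp b := by
    rw [← Real.exp_add]; ring_nf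
  have hc : 0 < Real.exp c := Real.exp_pos c
  have hb : 0 < Real.exp b := Real.exp_pos b
  have hbc'' : 0 < Real.exp (b - c) := Real.exp_pos _
  rw [abs_le]
  constructor
  · nlinarith [sq_nonneg (Real.exp c - 1)]
  · nlinarith

theorem logistic_transform_sup_lipschitz {d : ℕ} (T : Set (Fin d → ℝ))
    (hT : IsCompact T) (hTpos : 0 < volume T)
    (z z' : (Fin d → ℝ) → ℝ) (hz : Measurable z) (hz' : Measurable z')
    (M : ℝ) (hzM : ∀ t ∈ T, |z t| ≤ M) (hz'M : ∀ t ∈ T, |z' t| ≤ M)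
    (δ : ℝ) (hδ : ∀ t ∈ T, |z t - z' t| ≤ δ) :
    ∀ t ∈ T,
      |Real.exp (z t) / (∫ u in T, Real.exp (z u)) -
        Real.exp (z' t) / (∫ u in T, Real.exp (z' u))| ≤
        Real.exp (2 * M) / (volume T).toReal * (Real.exp (2 * δ) - 1) := by
  intro t ht
  have hTm : MeasurableSet T := hT.measurableSet
  have hfin : volume T < ⊤ := hT.measure_lt_top
  set lam := (volume T).toReal with hlamdef
  have hlam : 0 < lam := ENNReal.toReal_pos hTpos.ne' hfin.ne
  set I := ∫ u in T, Real.exp (z u) with hIdef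
  set I' := ∫ u in T, Real.exp (z' u) with hI'def
  have hδ0 : 0 ≤ δ := le_trans (abs_nonneg _) (hδ t ht)
  haveI : IsFiniteMeasure (volume.restrict T) :=
    ⟨by rwa [Measure.restrict_apply_univ]⟩
  -- integrability
  have hi : IntegrableOn (fun u => Real.exp (z u)) T := by
    apply Integrable.mono' (integrable_const (Real.exp M)) hz.exp.aestronglyMeasurable
    filter_upwards [ae_restrict_mem hTm] with u hu
    rw [Real.norm_eq_abs, abs_of_pos (Real.exp_pos _)]
    exact Real.exp_le_exp.2 (le_of_abs_le (hzM u hu))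
  have hi' : IntegrableOn (fun u => Real.exp (z' u)) T := by
    apply Integrable.mono' (integrable_const (Real.exp M)) hz'.exp.aestronglyMeasurable
    filter_upwards [ae_restrict_mem hTm] with u hu
    rw [Real.norm_eq_abs, abs_of_pos (Real.exp_pos _)]
    exact Real.exp_le_exp.2 (le_of_abs_le (hz'M u hu))
  -- lower bounds
  have hIlb : lam * Real.exp (-M) ≤ I := by
    have h1 : ∫ _u in T, Real.exp (-M) ≤ I :=
      setIntegral_mono_on (integrableOn_const hfin.ne) hi hTm
        (fun u hu => Real.exp_le_exp.2 (by linarith [(abs_le.1 (hzM u hu)).1]))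
    rwa [setIntegral_const, smul_eq_mul] at h1
  have hI'lb : lam * Real.exp (-M) ≤ I' := by
    have h1 : ∫ _u in T, Real.exp (-M) ≤ I' :=
      setIntegral_mono_on (integrableOn_const hfin.ne) hi' hTm
        (fun u hu => Real.exp_le_exp.2 (by linarith [(abs_le.1 (hz'M u hu)).1]))
    rwa [setIntegral_const, smul_eq_mul] at h1
  have hpos : 0 < lam * Real.exp (-M) := by positivity
  have hI0 : 0 < I := lt_of_lt_of_le hpos hIlb
  have hI'0 : 0 < I' := lt_of_lt_of_le hpos hI'lb
  -- integrability of products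
  have hint1 : IntegrableOn (fun u => Real.exp (z t + z' u)) T := by
    simpa [Real.exp_add, IntegrableOn] using hi'.const_mul (Real.exp (z t))
  have hint2 : IntegrableOn (fun u => Real.exp (z' t + z u)) T := by
    simpa [Real.exp_add, IntegrableOn] using hi.const_mul (Real.exp (z' t))
  -- key numerator bound
  have h1 : Real.exp (z t) * I' = ∫ u in T, Real.exp (z t + z' u) := by
    rw [← integral_const_mul]; simp [Real.exp_add]
  have h2 : Real.exp (z' t) * I = ∫ u in T, Real.exp (z' t + z u) := by
    rw [← integral_const_mul]; simp [Real.exp_add]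
  have key : |Real.exp (z t) * I' - Real.exp (z' t) * I| ≤
      (Real.exp (2 * δ) - 1) * (Real.exp (z' t) * I) := by
    rw [h1, h2, ← integral_sub hint1 hint2]
    calc |∫ u in T, (Real.exp (z t + z' u) - Real.exp (z' t + z u))|
        ≤ ∫ u in T, |Real.exp (z t + z' u) - Real.exp (z' t + z u)| :=
          by simpa [Real.norm_eq_abs] using
            norm_integral_le_integral_norm (μ := volume.restrict T)
              (fun u => Real.exp (z t + z' u) - Real.exp (z' t + z u))
      _ ≤ ∫ u in T, (Real.exp (2 * δ) - 1) * Real.exp (z' t + z u) := by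
          apply setIntegral_mono_on ((hint1.sub hint2).abs) (hint2.const_mul _) hTm
          intro u hu
          apply abs_exp_sub_exp_le
          obtain ⟨a1, a2⟩ := abs_le.1 (hδ t ht)
          obtain ⟨b1, b2⟩ := abs_le.1 (hδ u hu)
          rw [abs_le]; constructor <;> [linarith; linarith]
      _ = (Real.exp (2 * δ) - 1) * ∫ u in T, Real.exp (z' t + z u) := by
          rw [integral_const_mul]
  -- final assembly
  have hD : Real.exp (z t) / I - Real.exp (z' t) / I' =
      (Real.exp (z t) * I' - Real.exp (z' t) * I) / (I * I') := by
    field_simp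
  have hδpos : 0 ≤ Real.exp (2 * δ) - 1 := by
    have : (1 : ℝ) = Real.exp 0 := (Real.exp_zero).symm
    rw [this]
    simp only [sub_nonneg]
    exact Real.exp_le_exp.2 (by linarith)
  have hzM' : Real.exp (z' t) ≤ Real.exp M :=
    Real.exp_le_exp.2 (le_of_abs_le (hz'M t ht))
  calc |Real.exp (z t) / I - Real.exp (z' t) / I'|
      = |Real.exp (z t) * I' - Real.exp (z' t) * I| / (I * I') := by
        rw [hD, abs_div, abs_of_pos (mul_pos hI0 hI'0)]
    _ ≤ ((Real.exp (2 * δ) - 1) * (Real.exp (z' t) * I)) / (I * I') := by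
        gcongr
    _ = (Real.exp (2 * δ) - 1) * (Real.exp (z' t) / I') := by
        field_simp
    _ ≤ (Real.exp (2 * δ) - 1) * (Real.exp M / (lam * Real.exp (-M))) := by
        gcongr
    _ = Real.exp (2 * M) / lam * (Real.exp (2 * δ) - 1) := by
        rw [Real.exp_neg]
        field_simp
        rw [two_mul M, Real.exp_add]
        ring
end
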